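/- With a Cliff(1,1)-structure (Φ1,Φ2,Φ3) on (V,g) of signature (2,2), the algebraic curvature tensor R := λ0 R_0 + Σᵢ λᵢ R_{Φᵢ} + Σ_{i<j} λᵢⱼ[R_{Φᵢ} + R_{Φⱼ} - R_{(Φᵢ-Φⱼ)}] is Osserman: the characteristic polynomial of J_R(x) is the same for all unit timelike vectors x. -/

import Mathlib

/-- The Jacobi operator of `R₀`: `y ↦ R₀(y,x)x = g(y,x)x - g(x,x)y`. -/
def J0L {V : Type*} [AddCommGroup V] [Module ℝ V]
    (g : V →ₗ[ℝ] V →ₗ[ℝ] ℝ) (x : V) : V →ₗ[ℝ] V :=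
  (g.flip x).smulRight x - g x x • LinearMap.id

/-- The Jacobi operator of `R_Φ`: `y ↦ R_Φ(y,x)x = g(Φx,x)Φy - 3g(Φy,x)Φx`. -/
def JPhiL {V : Type*} [AddCommGroup V] [Module ℝ V]
    (g : V →ₗ[ℝ] V →ₗ[ℝ] ℝ) (Φ : V →ₗ[ℝ] V) (x : V) : V →ₗ[ℝ] V :=
  g (Φ x) x • Φ - (3 : ℝ) • ((g.flip x ∘ₗ Φ).smulRight (Φ x))

/-- The Jacobi operator of
`R = λ₀R₀ + Σᵢ λᵢ R_{Φᵢ} + Σ_{i<j} λᵢⱼ[R_{Φᵢ}+R_{Φⱼ}-R_{Φᵢ-Φⱼ}]`. -/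
def JbigR {V : Type*} [AddCommGroup V] [Module ℝ V]
    (g : V →ₗ[ℝ] V →ₗ[ℝ] ℝ) (Φ₁ Φ₂ Φ₃ : V →ₗ[ℝ] V)
    (l0 l1 l2 l3 l12 l13 l23 : ℝ) (x : V) : V →ₗ[ℝ] V :=
  l0 • J0L g x + l1 • JPhiL g Φ₁ x + l2 • JPhiL g Φ₂ x + l3 • JPhiL g Φ₃ x +
    l12 • (JPhiL g Φ₁ x + JPhiL g Φ₂ x - JPhiL g (Φ₁ - Φ₂) x) +
    l13 • (JPhiL g Φ₁ x + JPhiL g Φ₃ x - JPhiL g (Φ₁ - Φ₃) x) +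
    l23 • (JPhiL g Φ₂ x + JPhiL g Φ₃ x - JPhiL g (Φ₂ - Φ₃) x)

/-!
For a unit timelike `x`, skew-adjointness and the Clifford relations make
`x, Φ₁x, Φ₂x, Φ₃x` an orthonormal frame of signature `(-,-,+,+)`, hence a basis of the
four-dimensional space `V`. Each `R_Φ` has the rank-one Jacobi operator
`y ↦ 3 g(y,Φx) Φx`, so in this frame the matrix of `J_R(x)` involves only the `λ`'s
and not `x`.
-/

section Skew

variable {V : Type*} [AddCommGroup V] [Module ℝ V] {g : V →ₗ[ℝ] V →ₗ[ℝ] ℝ}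
  {Φ Ψ : V →ₗ[ℝ] V}

theorem skew_apply_self_eq_zero (hsymm : ∀ v w, g v w = g w v)
    (hΦ : ∀ v w, g (Φ v) w = - g v (Φ w)) (x : V) : g (Φ x) x = 0 := by
  linarith [hΦ x x, hsymm x (Φ x)]

theorem skew_apply_eq_zero_of_anticomm (hsymm : ∀ v w, g v w = g w v)
    (hΦ : ∀ v w, g (Φ v) w = - g v (Φ w)) (hΨ : ∀ v w, g (Ψ v) w = - g v (Ψ w))
    (hac : Φ ∘ₗ Ψ + Ψ ∘ₗ Φ = 0) (x : V) : g (Φ x) (Ψ x) = 0 := by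
  have hΦΨ : Φ (Ψ x) = - Ψ (Φ x) := eq_neg_of_add_eq_zero_left (LinearMap.congr_fun hac x)
  have h := hΦ x (Ψ x)
  rw [hΦΨ, map_neg, ← hΨ, hsymm (Ψ x)] at h
  linarith

theorem skew_apply_self_of_comp_self_eq_smul (hΦ : ∀ v w, g (Φ v) w = - g v (Φ w)) {c : ℝ}
    (hsq : Φ ∘ₗ Φ = c • LinearMap.id) (x : V) : g (Φ x) (Φ x) = -c * g x x := by
  rw [hΦ, ← LinearMap.comp_apply Φ Φ x, hsq]
  simp

theorem JPhiL_apply_of_skew (hsymm : ∀ v w, g v w = g w v)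
    (hΦ : ∀ v w, g (Φ v) w = - g v (Φ w)) (x y : V) :
    JPhiL g Φ x y = (3 * g y (Φ x)) • Φ x := by
  simp [JPhiL, skew_apply_self_eq_zero hsymm hΦ, hΦ, mul_smul]

theorem JPhiL_add_JPhiL_sub_JPhiL_sub_apply (hsymm : ∀ v w, g v w = g w v)
    (hΦ : ∀ v w, g (Φ v) w = - g v (Φ w)) (hΨ : ∀ v w, g (Ψ v) w = - g v (Ψ w)) (x y : V) :
    JPhiL g Φ x y + JPhiL g Ψ x y - JPhiL g (Φ - Ψ) x y =
      (3 * g y (Φ x)) • Ψ x + (3 * g y (Ψ x)) • Φ x := by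
  have hΦΨ : ∀ v w, g ((Φ - Ψ) v) w = - g v ((Φ - Ψ) w) := by
    intro v w
    simp only [LinearMap.sub_apply, map_sub, hΦ, hΨ]
    ring
  rw [JPhiL_apply_of_skew hsymm hΦ, JPhiL_apply_of_skew hsymm hΨ,
    JPhiL_apply_of_skew hsymm hΦΨ]
  simp only [LinearMap.sub_apply, map_sub]
  module

end Skew

section Clifford

variable {V : Type*} [AddCommGroup V] [Module ℝ V] {g : V →ₗ[ℝ] V →ₗ[ℝ] ℝ}
  {Φ₁ Φ₂ Φ₃ : V →ₗ[ℝ] V}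

theorem JbigR_apply (hsymm : ∀ v w, g v w = g w v)
    (hskew₁ : ∀ v w, g (Φ₁ v) w = - g v (Φ₁ w))
    (hskew₂ : ∀ v w, g (Φ₂ v) w = - g v (Φ₂ w))
    (hskew₃ : ∀ v w, g (Φ₃ v) w = - g v (Φ₃ w))
    (l0 l1 l2 l3 l12 l13 l23 : ℝ) (x y : V) :
    JbigR g Φ₁ Φ₂ Φ₃ l0 l1 l2 l3 l12 l13 l23 x y =
      l0 • (g y x • x - g x x • y) +
      (3 * (l1 * g y (Φ₁ x) + l12 * g y (Φ₂ x) + l13 * g y (Φ₃ x))) • Φ₁ x +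
      (3 * (l12 * g y (Φ₁ x) + l2 * g y (Φ₂ x) + l23 * g y (Φ₃ x))) • Φ₂ x +
      (3 * (l13 * g y (Φ₁ x) + l23 * g y (Φ₂ x) + l3 * g y (Φ₃ x))) • Φ₃ x := by
  simp only [JbigR, LinearMap.add_apply, LinearMap.sub_apply, LinearMap.smul_apply]
  rw [JPhiL_add_JPhiL_sub_JPhiL_sub_apply hsymm hskew₁ hskew₂,
    JPhiL_add_JPhiL_sub_JPhiL_sub_apply hsymm hskew₁ hskew₃,
    JPhiL_add_JPhiL_sub_JPhiL_sub_apply hsymm hskew₂ hskew₃,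
    JPhiL_apply_of_skew hsymm hskew₁, JPhiL_apply_of_skew hsymm hskew₂,
    JPhiL_apply_of_skew hsymm hskew₃]
  simp only [J0L, LinearMap.sub_apply, LinearMap.smul_apply, LinearMap.smulRight_apply,
    LinearMap.flip_apply, LinearMap.id_apply]
  module

variable (Φ₁ Φ₂ Φ₃) in
def cliffFrame (x : V) : Fin 4 → V := ![x, Φ₁ x, Φ₂ x, Φ₃ x]

theorem cliffFrame_gram (hsymm : ∀ v w, g v w = g w v)
    (hskew₁ : ∀ v w, g (Φ₁ v) w = - g v (Φ₁ w))
    (hskew₂ : ∀ v w, g (Φ₂ v) w = - g v (Φ₂ w))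
    (hskew₃ : ∀ v w, g (Φ₃ v) w = - g v (Φ₃ w))
    (hsq₁ : Φ₁ ∘ₗ Φ₁ = -LinearMap.id)
    (hsq₂ : Φ₂ ∘ₗ Φ₂ = LinearMap.id) (hsq₃ : Φ₃ ∘ₗ Φ₃ = LinearMap.id)
    (hac₁₂ : Φ₁ ∘ₗ Φ₂ + Φ₂ ∘ₗ Φ₁ = 0) (hac₁₃ : Φ₁ ∘ₗ Φ₃ + Φ₃ ∘ₗ Φ₁ = 0)
    (hac₂₃ : Φ₂ ∘ₗ Φ₃ + Φ₃ ∘ₗ Φ₂ = 0) {x : V} (hx : g x x = -1) (i j : Fin 4) :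
    g (cliffFrame Φ₁ Φ₂ Φ₃ x i) (cliffFrame Φ₁ Φ₂ Φ₃ x j) =
      if i = j then (if (i : ℕ) < 2 then (-1 : ℝ) else 1) else 0 := by
  have h₁ := skew_apply_self_eq_zero hsymm hskew₁ x
  have h₂ := skew_apply_self_eq_zero hsymm hskew₂ x
  have h₃ := skew_apply_self_eq_zero hsymm hskew₃ x
  have h₁₂ := skew_apply_eq_zero_of_anticomm hsymm hskew₁ hskew₂ hac₁₂ x
  have h₁₃ := skew_apply_eq_zero_of_anticomm hsymm hskew₁ hskew₃ hac₁₃ x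
  have h₂₃ := skew_apply_eq_zero_of_anticomm hsymm hskew₂ hskew₃ hac₂₃ x
  have h₁₁ := skew_apply_self_of_comp_self_eq_smul hskew₁ (c := -1) (by simpa using hsq₁) x
  have h₂₂ := skew_apply_self_of_comp_self_eq_smul hskew₂ (c := 1) (by simpa using hsq₂) x
  have h₃₃ := skew_apply_self_of_comp_self_eq_smul hskew₃ (c := 1) (by simpa using hsq₃) x
  fin_cases i <;> fin_cases j <;>
    simp [cliffFrame, hsymm x (Φ₁ x), hsymm x (Φ₂ x), hsymm x (Φ₃ x),
      hsymm (Φ₂ x) (Φ₁ x), hsymm (Φ₃ x) (Φ₁ x), hsymm (Φ₃ x) (Φ₂ x),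
      hx, h₁, h₂, h₃, h₁₂, h₁₃, h₂₃, h₁₁, h₂₂, h₃₃]

def jacobiModel (l0 l1 l2 l3 l12 l13 l23 : ℝ) : Matrix (Fin 4) (Fin 4) ℝ :=
  !![0, 0, 0, 0;
     0, l0 - 3 * l1, 3 * l12, 3 * l13;
     0, -(3 * l12), l0 + 3 * l2, 3 * l23;
     0, -(3 * l13), 3 * l23, l0 + 3 * l3]

theorem charpoly_JbigR [Module.Finite ℝ V] [Module.Free ℝ V] (hdim : Module.finrank ℝ V = 4)
    (hsymm : ∀ v w, g v w = g w v)
    (hskew₁ : ∀ v w, g (Φ₁ v) w = - g v (Φ₁ w))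
    (hskew₂ : ∀ v w, g (Φ₂ v) w = - g v (Φ₂ w))
    (hskew₃ : ∀ v w, g (Φ₃ v) w = - g v (Φ₃ w))
    (hsq₁ : Φ₁ ∘ₗ Φ₁ = -LinearMap.id)
    (hsq₂ : Φ₂ ∘ₗ Φ₂ = LinearMap.id) (hsq₃ : Φ₃ ∘ₗ Φ₃ = LinearMap.id)
    (hac₁₂ : Φ₁ ∘ₗ Φ₂ + Φ₂ ∘ₗ Φ₁ = 0) (hac₁₃ : Φ₁ ∘ₗ Φ₃ + Φ₃ ∘ₗ Φ₁ = 0)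
    (hac₂₃ : Φ₂ ∘ₗ Φ₃ + Φ₃ ∘ₗ Φ₂ = 0)
    (l0 l1 l2 l3 l12 l13 l23 : ℝ) (x : V) (hx : g x x = -1) :
    (JbigR g Φ₁ Φ₂ Φ₃ l0 l1 l2 l3 l12 l13 l23 x).charpoly =
      (jacobiModel l0 l1 l2 l3 l12 l13 l23).charpoly := by
  have gram := cliffFrame_gram hsymm hskew₁ hskew₂ hskew₃ hsq₁ hsq₂ hsq₃ hac₁₂ hac₁₃ hac₂₃ hx
  have hli : LinearIndependent ℝ (cliffFrame Φ₁ Φ₂ Φ₃ x) :=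
    LinearMap.BilinForm.linearIndependent_of_iIsOrtho
      (LinearMap.BilinForm.iIsOrtho_def.2 fun i j hij ↦ by rw [gram, if_neg hij])
      (fun i ↦ by rw [gram, if_pos rfl]; split_ifs <;> norm_num)
  let b := basisOfLinearIndependentOfCardEqFinrank hli (by simp [hdim])
  have hb : ⇑b = cliffFrame Φ₁ Φ₂ Φ₃ x := coe_basisOfLinearIndependentOfCardEqFinrank _ _
  have hJ : JbigR g Φ₁ Φ₂ Φ₃ l0 l1 l2 l3 l12 l13 l23 x
      = Matrix.toLin b b (jacobiModel l0 l1 l2 l3 l12 l13 l23) := by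
    refine b.ext fun j ↦ ?_
    rw [Matrix.toLin_self]
    simp only [JbigR_apply hsymm hskew₁ hskew₂ hskew₃, Fin.sum_univ_four, hb]
    simp [cliffFrame, Fin.forall_fin_succ] at gram
    fin_cases j <;> simp [cliffFrame, jacobiModel, gram] <;> module
  rw [hJ, ← LinearMap.charpoly_toMatrix _ b, LinearMap.toMatrix_toLin]

end Clifford

theorem bigR_is_Osserman_general {V : Type*} [AddCommGroup V] [Module ℝ V]
    [Module.Finite ℝ V] [Module.Free ℝ V]
    (g : V →ₗ[ℝ] V →ₗ[ℝ] ℝ) (hsymm : ∀ v w, g v w = g w v)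
    (e : Module.Basis (Fin 4) ℝ V)
    (Φ₁ Φ₂ Φ₃ : V →ₗ[ℝ] V)
    (hskew₁ : ∀ v w, g (Φ₁ v) w = - g v (Φ₁ w))
    (hskew₂ : ∀ v w, g (Φ₂ v) w = - g v (Φ₂ w))
    (hskew₃ : ∀ v w, g (Φ₃ v) w = - g v (Φ₃ w))
    (hsq₁ : Φ₁ ∘ₗ Φ₁ = -LinearMap.id)
    (hsq₂ : Φ₂ ∘ₗ Φ₂ = LinearMap.id) (hsq₃ : Φ₃ ∘ₗ Φ₃ = LinearMap.id)
    (hac₁₂ : Φ₁ ∘ₗ Φ₂ + Φ₂ ∘ₗ Φ₁ = 0) (hac₁₃ : Φ₁ ∘ₗ Φ₃ + Φ₃ ∘ₗ Φ₁ = 0)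
    (hac₂₃ : Φ₂ ∘ₗ Φ₃ + Φ₃ ∘ₗ Φ₂ = 0)
    (l0 l1 l2 l3 l12 l13 l23 : ℝ) :
    ∀ x x' : V, g x x = -1 → g x' x' = -1 →
      (JbigR g Φ₁ Φ₂ Φ₃ l0 l1 l2 l3 l12 l13 l23 x).charpoly =
      (JbigR g Φ₁ Φ₂ Φ₃ l0 l1 l2 l3 l12 l13 l23 x').charpoly := by
  intro x x' hx hx'
  have hdim : Module.finrank ℝ V = 4 := by simp [Module.finrank_eq_card_basis e]
  have model := charpoly_JbigR hdim hsymm hskew₁ hskew₂ hskew₃ hsq₁ hsq₂ hsq₃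
    hac₁₂ hac₁₃ hac₂₃ l0 l1 l2 l3 l12 l13 l23
  rw [model x hx, model x' hx']

/-- the curvature tensor built from a Cliff(1,1)-structure is Osserman:
the characteristic polynomial of its Jacobi operator is the same for all unit
timelike vectors. -/
theorem bigR_is_Osserman {V : Type*} [AddCommGroup V] [Module ℝ V]
    [Module.Finite ℝ V] [Module.Free ℝ V]
    (g : V →ₗ[ℝ] V →ₗ[ℝ] ℝ) (hsymm : ∀ v w, g v w = g w v)
    (e : Module.Basis (Fin 4) ℝ V)
    (he : ∀ i j, g (e i) (e j) =
      if i = j then (if (i : ℕ) < 2 then (-1 : ℝ) else 1) else 0)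
    (Φ₁ Φ₂ Φ₃ : V →ₗ[ℝ] V)
    (hskew₁ : ∀ v w, g (Φ₁ v) w = - g v (Φ₁ w))
    (hskew₂ : ∀ v w, g (Φ₂ v) w = - g v (Φ₂ w))
    (hskew₃ : ∀ v w, g (Φ₃ v) w = - g v (Φ₃ w))
    (hsq₁ : Φ₁ ∘ₗ Φ₁ = -LinearMap.id)
    (hsq₂ : Φ₂ ∘ₗ Φ₂ = LinearMap.id) (hsq₃ : Φ₃ ∘ₗ Φ₃ = LinearMap.id)
    (hac₁₂ : Φ₁ ∘ₗ Φ₂ + Φ₂ ∘ₗ Φ₁ = 0) (hac₁₃ : Φ₁ ∘ₗ Φ₃ + Φ₃ ∘ₗ Φ₁ = 0)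
    (hac₂₃ : Φ₂ ∘ₗ Φ₃ + Φ₃ ∘ₗ Φ₂ = 0)
    (hK : Φ₃ = Φ₂ ∘ₗ Φ₁)
    (l0 l1 l2 l3 l12 l13 l23 : ℝ) :
    ∀ x x' : V, g x x = -1 → g x' x' = -1 →
      (JbigR g Φ₁ Φ₂ Φ₃ l0 l1 l2 l3 l12 l13 l23 x).charpoly =
      (JbigR g Φ₁ Φ₂ Φ₃ l0 l1 l2 l3 l12 l13 l23 x').charpoly :=
  bigR_is_Osserman_general g hsymm e Φ₁ Φ₂ Φ₃ hskew₁ hskew₂ hskew₃ hsq₁ hsq₂ hsq₃ hac₁₂ hac₁₃ hac₂₃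
    l0 l1 l2 l3 l12 l13 l23
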